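/- Let f ∈ ℝ[x₁,…,xₙ] be homogeneous of degree d, square-free, hyperbolic with respect to e ∈ ℝⁿ, with f(e) > 0. Then { a ∈ ℝⁿ : Δ_{e,a} f is a sum of squares of polynomials in ℝ[x₁,…,xₙ] } ⊆ closure(C(f,e)). -/

import Mathlib

open Filter Topology

/-- The restriction of a multivariate polynomial to the line `t ↦ t•e + a`,
as a univariate polynomial in `t`. -/
noncomputable def lineRestrict {n : ℕ} (f : MvPolynomial (Fin n) ℝ) (e a : Fin n → ℝ) :
    Polynomial ℝ :=
  MvPolynomial.aeval (fun i => Polynomial.C (a i) + Polynomial.C (e i) * Polynomial.X) f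

/-- A univariate real polynomial has only real zeros: every complex root is real. -/
def RealRooted (p : Polynomial ℝ) : Prop :=
  ∀ z : ℂ, Polynomial.aeval z p = 0 → z.im = 0

/-- `f` is hyperbolic with respect to `e`: `f(e) ≠ 0` and for every `a`,
all roots of `t ↦ f(t•e + a)` are real. -/
def IsHyperbolic {n : ℕ} (f : MvPolynomial (Fin n) ℝ) (e : Fin n → ℝ) : Prop :=
  MvPolynomial.eval e f ≠ 0 ∧ ∀ a : Fin n → ℝ, RealRooted (lineRestrict f e a)

/-- The roots of a univariate real polynomial, sorted increasingly (with multiplicity). -/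
noncomputable def sortedRoots (p : Polynomial ℝ) : List ℝ :=
  p.roots.sort (· ≤ ·)

/-- `q` interlaces `p` (univariate): both have only real roots, `deg q = deg p − 1`,
and with roots `α₁ ≤ … ≤ α_d` of `p`, `β₁ ≤ … ≤ β_{d-1}` of `q`,
one has `α_i ≤ β_i ≤ α_{i+1}`. -/
def InterlacesU (q p : Polynomial ℝ) : Prop :=
  RealRooted p ∧ RealRooted q ∧ q.natDegree + 1 = p.natDegree ∧
    ∀ i : ℕ, i + 1 < (sortedRoots p).length →
      (sortedRoots p).getD i 0 ≤ (sortedRoots q).getD i 0 ∧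
        (sortedRoots q).getD i 0 ≤ (sortedRoots p).getD (i + 1) 0

/-- `q` strictly interlaces `p` (univariate): all interlacing inequalities are strict. -/
def StrictInterlacesU (q p : Polynomial ℝ) : Prop :=
  RealRooted p ∧ RealRooted q ∧ q.natDegree + 1 = p.natDegree ∧
    ∀ i : ℕ, i + 1 < (sortedRoots p).length →
      (sortedRoots p).getD i 0 < (sortedRoots q).getD i 0 ∧
        (sortedRoots q).getD i 0 < (sortedRoots p).getD (i + 1) 0

/-- `g` interlaces `f` with respect to `e`: `g(t•e+a)` interlaces `f(t•e+a)` for every `a`. -/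
def Interlaces {n : ℕ} (g f : MvPolynomial (Fin n) ℝ) (e : Fin n → ℝ) : Prop :=
  ∀ a : Fin n → ℝ, InterlacesU (lineRestrict g e a) (lineRestrict f e a)

/-- `g` strictly interlaces `f` with respect to `e`: `g(t•e+a)` strictly interlaces
`f(t•e+a)` for all `a` in a nonempty Zariski-open subset of `ℝⁿ`. -/
def StrictInterlaces {n : ℕ} (g f : MvPolynomial (Fin n) ℝ) (e : Fin n → ℝ) : Prop :=
  ∃ p : MvPolynomial (Fin n) ℝ, p ≠ 0 ∧ ∀ a : Fin n → ℝ, MvPolynomial.eval a p ≠ 0 →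
    StrictInterlacesU (lineRestrict g e a) (lineRestrict f e a)

/-- The hyperbolicity cone `C(f,e)`: the connected component of `e` in `ℝⁿ \ V_ℝ(f)`. -/
def hypCone {n : ℕ} (f : MvPolynomial (Fin n) ℝ) (e : Fin n → ℝ) : Set (Fin n → ℝ) :=
  connectedComponentIn {x | MvPolynomial.eval x f ≠ 0} e

/-- The directional derivative `D_e f = Σᵢ eᵢ ∂f/∂xᵢ`. -/
noncomputable def Dd {n : ℕ} (e : Fin n → ℝ) (f : MvPolynomial (Fin n) ℝ) :
    MvPolynomial (Fin n) ℝ :=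
  ∑ i, MvPolynomial.C (e i) * MvPolynomial.pderiv i f

/-- `Int(f,e)`: homogeneous polynomials of degree `d−1` interlacing `f` (of degree `d`)
with respect to `e` and positive at `e`. -/
def IntCone {n : ℕ} (f : MvPolynomial (Fin n) ℝ) (e : Fin n → ℝ) (d : ℕ) :
    Set (MvPolynomial (Fin n) ℝ) :=
  {g | g.IsHomogeneous (d - 1) ∧ Interlaces g f e ∧ 0 < MvPolynomial.eval e g}

/-- The Wronskian polynomial `Δ_{e,a} f = D_e f · D_a f − f · D_e D_a f`. -/
noncomputable def Wron {n : ℕ} (e a : Fin n → ℝ) (f : MvPolynomial (Fin n) ℝ) :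
    MvPolynomial (Fin n) ℝ :=
  Dd e f * Dd a f - f * Dd e (Dd a f)

/-- A polynomial is a sum of squares of polynomials. -/
def IsSOS {n : ℕ} (p : MvPolynomial (Fin n) ℝ) : Prop :=
  ∃ (k : ℕ) (g : Fin k → MvPolynomial (Fin n) ℝ), p = ∑ i, (g i) ^ 2

/-- The matrix pencil `M(x) = x₁M₁ + … + xₙMₙ` as a matrix of polynomials. -/
noncomputable def pencil {n d : ℕ} (M : Fin n → Matrix (Fin d) (Fin d) ℝ) :
    Matrix (Fin d) (Fin d) (MvPolynomial (Fin n) ℝ) :=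
  Matrix.of fun i j => ∑ k, MvPolynomial.C (M k i j) * MvPolynomial.X k

/-- `Δ_{ij} f = (∂f/∂xᵢ)(∂f/∂xⱼ) − f·(∂²f/∂xᵢ∂xⱼ)`. -/
noncomputable def Dij {n : ℕ} (i j : Fin n) (f : MvPolynomial (Fin n) ℝ) :
    MvPolynomial (Fin n) ℝ :=
  MvPolynomial.pderiv i f * MvPolynomial.pderiv j f -
    f * MvPolynomial.pderiv i (MvPolynomial.pderiv j f)

/-- `f` is stable: `f(μ) ≠ 0` whenever every coordinate of `μ` has positive imaginary part. -/
def IsStable {n : ℕ} (f : MvPolynomial (Fin n) ℝ) : Prop :=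
  ∀ μ : Fin n → ℂ, (∀ i, 0 < (μ i).im) → MvPolynomial.aeval μ f ≠ 0

/-!
Along the line `t ↦ t • e + a` write `f(te + a) = f(e) ∏ᵢ (t - rᵢ)`; by homogeneity
`f(te + sa) = f(e) ∏ᵢ (t - s rᵢ)` for every `s`. If all `rᵢ ≤ 0`, then `f` does not vanish on the
segment from `e` to `a + εe`, so `a + εe ∈ C(f,e)` for all `ε > 0`. If instead the largest root `τ`
were positive, put `P(s) = f(τe + sa)` and `Q(s) = D_e f(τe + sa)`. The Wronskian `QP' - Q'P` is
`Δ_{e,a} f (τe + sa) ≥ 0`, so `Q/P` decreases on `[0,1)`; but `Q/P = Σᵢ 1/(τ - s rᵢ)` is at least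
`1/(τ(1 - s))`, which blows up as `s → 1`.
-/

open Polynomial

section DirectionalDerivative

variable {n : ℕ}

noncomputable def dirDeriv (v : Fin n → ℝ) :
    Derivation ℝ (MvPolynomial (Fin n) ℝ) (MvPolynomial (Fin n) ℝ) :=
  ∑ i, (MvPolynomial.C (v i) : MvPolynomial (Fin n) ℝ) • MvPolynomial.pderiv i

theorem dirDeriv_apply (v : Fin n → ℝ) (f : MvPolynomial (Fin n) ℝ) : dirDeriv v f = Dd v f := by
  rw [dirDeriv, ← Derivation.coeFnAddMonoidHom_apply, map_sum, Finset.sum_apply]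
  simp [Dd]

theorem dirDeriv_X (v : Fin n → ℝ) (k : Fin n) :
    dirDeriv v (MvPolynomial.X k) = MvPolynomial.C (v k) := by
  simp [dirDeriv_apply, Dd, MvPolynomial.pderiv_X, Pi.single_apply]

theorem Dd_comm (v w : Fin n → ℝ) (f : MvPolynomial (Fin n) ℝ) :
    Dd v (Dd w f) = Dd w (Dd v f) := by
  have h : ⁅dirDeriv v, dirDeriv w⁆ = 0 :=
    MvPolynomial.derivation_ext fun k => by
      simp [Derivation.commutator_apply, dirDeriv_X, ← MvPolynomial.algebraMap_eq]
  simpa [Derivation.commutator_apply, sub_eq_zero, dirDeriv_apply] using congr($h f)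

end DirectionalDerivative

section LineRestriction

variable {n : ℕ}

theorem eval_lineRestrict (f : MvPolynomial (Fin n) ℝ) (v c : Fin n → ℝ) (t : ℝ) :
    (lineRestrict f v c).eval t = MvPolynomial.eval (c + t • v) f := by
  rw [lineRestrict, ← Polynomial.coe_aeval_eq_eval, MvPolynomial.comp_aeval_apply]
  simp only [map_add, map_mul, Polynomial.aeval_C, Polynomial.aeval_X]
  rw [MvPolynomial.aeval_eq_eval]
  simp only [Algebra.algebraMap_self, RingHom.id_apply, mul_comm]
  rfl

theorem derivative_lineRestrict (f : MvPolynomial (Fin n) ℝ) (v c : Fin n → ℝ) :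
    derivative (lineRestrict f v c) = lineRestrict (Dd v f) v c := by
  rw [← dirDeriv_apply]
  induction f using MvPolynomial.induction_on with
  | C r => simp [lineRestrict, ← MvPolynomial.algebraMap_eq]
  | add p q hp hq => simp_all [lineRestrict]
  | mul_X p k hp =>
    simp only [lineRestrict, map_mul, Derivation.leibniz, dirDeriv_X, derivative_mul, smul_eq_mul,
      map_add] at hp ⊢
    simp only [hp, MvPolynomial.aeval_X, MvPolynomial.algHom_C, algebraMap_eq, derivative_add,
      derivative_mul, derivative_C, derivative_X, zero_mul, mul_one, zero_add]
    ring

theorem lineRestrict_Wron (e a c : Fin n → ℝ) (f : MvPolynomial (Fin n) ℝ) :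
    lineRestrict (Wron e a f) a c = wronskian (lineRestrict (Dd e f) a c) (lineRestrict f a c) := by
  simp only [Wron, wronskian, derivative_lineRestrict, Dd_comm e a f]
  simp only [lineRestrict, map_sub, map_mul]
  ring

end LineRestriction

section Degree

theorem Polynomial.coeff_prod_sum_of_natDegree_le {R ι : Type*} [CommSemiring R] (s : Finset ι)
    (q : ι → R[X]) (m : ι → ℕ) (h : ∀ i ∈ s, (q i).natDegree ≤ m i) :
    (∏ i ∈ s, q i).coeff (∑ i ∈ s, m i) = ∏ i ∈ s, (q i).coeff (m i) := by
  classical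
  induction s using Finset.induction_on with
  | empty => simp
  | insert x s hx ih =>
    rw [Finset.prod_insert hx, Finset.sum_insert hx, Finset.prod_insert hx,
      coeff_mul_add_eq_of_natDegree_le (h x (Finset.mem_insert_self x s))
        ((natDegree_prod_le _ _).trans
          (Finset.sum_le_sum fun i hi => h i (Finset.mem_insert_of_mem hi))),
      ih fun i hi => h i (Finset.mem_insert_of_mem hi)]

theorem natDegree_C_add_C_mul_X_le {R : Type*} [Semiring R] (a b : R) :
    (C a + C b * X).natDegree ≤ 1 := by
  compute_degree

theorem natDegree_C_add_C_mul_X_pow_le {R : Type*} [Semiring R] (a b : R) (k : ℕ) :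
    ((C a + C b * X) ^ k).natDegree ≤ k :=
  (natDegree_pow_le_of_le k (natDegree_C_add_C_mul_X_le a b)).trans (mul_one k).le

variable {n d : ℕ} {f : MvPolynomial (Fin n) ℝ}

theorem lineRestrict_eq_sum (f : MvPolynomial (Fin n) ℝ) (v c : Fin n → ℝ) :
    lineRestrict f v c = ∑ m ∈ f.support,
      C (f.coeff m) * ∏ i ∈ m.support, (C (c i) + C (v i) * X) ^ m i := by
  rw [lineRestrict, MvPolynomial.aeval_def, MvPolynomial.eval₂_eq]
  rfl

theorem natDegree_lineRestrict_le (hf : f.IsHomogeneous d) (v c : Fin n → ℝ) :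
    (lineRestrict f v c).natDegree ≤ d := by
  rw [lineRestrict_eq_sum]
  refine natDegree_sum_le_of_forall_le _ _ fun m hm => (natDegree_C_mul_le _ _).trans ?_
  rw [hf.degree_eq_sum_deg_support hm]
  exact (natDegree_prod_le _ _).trans
    (Finset.sum_le_sum fun i _ => natDegree_C_add_C_mul_X_pow_le _ _ _)

theorem coeff_lineRestrict_of_isHomogeneous (hf : f.IsHomogeneous d) (v c : Fin n → ℝ) :
    (lineRestrict f v c).coeff d = MvPolynomial.eval v f := by
  rw [lineRestrict_eq_sum, finsetSum_coeff, MvPolynomial.eval_eq]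
  refine Finset.sum_congr rfl fun m hm => ?_
  rw [coeff_C_mul, hf.degree_eq_sum_deg_support hm, coeff_prod_sum_of_natDegree_le _ _ _
    fun i _ => natDegree_C_add_C_mul_X_pow_le _ _ _]
  congr 1
  refine Finset.prod_congr rfl fun i _ => ?_
  simpa using coeff_pow_of_natDegree_le (m := m i) (natDegree_C_add_C_mul_X_le (c i) (v i))

end Degree

theorem RealRooted.splits {p : ℝ[X]} (hp : RealRooted p) : p.Splits :=
  Splits.of_splits_map (algebraMap ℝ ℂ) (IsAlgClosed.splits _) fun z hz =>
    ⟨z.re, Complex.ext rfl (hp z (mem_aroots.mp hz).2).symm⟩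

section Factorization

variable {n d : ℕ} {f : MvPolynomial (Fin n) ℝ}

def HasLineRoots (f : MvPolynomial (Fin n) ℝ) (e a : Fin n → ℝ) (R : Multiset ℝ) : Prop :=
  ∀ s : ℝ, lineRestrict f e (s • a) =
    C (MvPolynomial.eval e f) * (R.map fun r => X - C (s * r)).prod

theorem MvPolynomial.IsHomogeneous.eval_smul (hf : f.IsHomogeneous d) (s : ℝ) (x : Fin n → ℝ) :
    MvPolynomial.eval (s • x) f = s ^ d * MvPolynomial.eval x f := by
  rw [MvPolynomial.eval_eq, MvPolynomial.eval_eq, Finset.mul_sum]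
  refine Finset.sum_congr rfl fun m hm => ?_
  simp only [Pi.smul_apply, smul_eq_mul, mul_pow, Finset.prod_mul_distrib,
    Finset.prod_pow_eq_pow_sum, ← hf.degree_eq_sum_deg_support hm]
  ring

theorem hasLineRoots_roots (hf : f.IsHomogeneous d) {e : Fin n → ℝ}
    (hfe : MvPolynomial.eval e f ≠ 0) {a : Fin n → ℝ} (hrr : RealRooted (lineRestrict f e a)) :
    HasLineRoots f e a (lineRestrict f e a).roots := by
  intro s
  set p := lineRestrict f e a
  have hcoeff : p.coeff d = MvPolynomial.eval e f := coeff_lineRestrict_of_isHomogeneous hf e a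
  have hdeg : p.natDegree = d :=
    (natDegree_lineRestrict_le hf e a).antisymm (le_natDegree_of_ne_zero (hcoeff ▸ hfe))
  have hcard : p.roots.card = d := hdeg ▸ hrr.splits.natDegree_eq_card_roots.symm
  have hp : ∀ t, p.eval t = MvPolynomial.eval e f * (p.roots.map (t - ·)).prod := fun t => by
    rw [hrr.splits.eval_eq_prod_roots, leadingCoeff, hdeg, hcoeff]
  refine Polynomial.funext fun t => ?_
  rw [eval_lineRestrict, eval_mul, eval_C, eval_multiset_prod, Multiset.map_map]
  rcases eq_or_ne s 0 with rfl | hs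
  · simp [hf.eval_smul t e, hcard, mul_comm]
  · have hpt : s • a + t • e = s • (a + (t / s) • e) := by
      rw [smul_add, smul_smul, mul_div_cancel₀ t hs]
    have hfactor : ∀ r, t - s * r = s * (t / s - r) := fun r => by field_simp
    simp only [hpt, hf.eval_smul, ← eval_lineRestrict, Function.comp_def, eval_sub, eval_X,
      eval_C, hfactor, Multiset.prod_map_mul, Multiset.map_const', Multiset.prod_replicate, hcard]
    rw [hp]
    ring

end Factorization

theorem eval_derivative_prod_X_sub_C_nonneg {S : Multiset ℝ} {x : ℝ} (h : ∀ r ∈ S, r ≤ x) :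
    0 ≤ eval x (derivative (S.map fun r => X - C r).prod) := by
  classical
  rw [derivative_prod, eval_multisetSum, Multiset.map_map]
  refine Multiset.sum_nonneg fun y hy => ?_
  obtain ⟨r, -, rfl⟩ := Multiset.mem_map.mp hy
  simp only [Function.comp_apply]
  rw [derivative_X_sub_C, mul_one, eval_multiset_prod]
  refine Multiset.prod_nonneg fun z hz => ?_
  obtain ⟨q, hq, rfl⟩ := Multiset.mem_map.mp hz
  obtain ⟨r', hr', rfl⟩ := Multiset.mem_map.mp hq
  simpa using h r' (Multiset.mem_of_mem_erase hr')

theorem eval_prod_X_sub_C_le_mul_eval_derivative {S : Multiset ℝ} {x r₀ : ℝ} (hr₀ : r₀ ∈ S)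
    (h : ∀ r ∈ S, r ≤ x) :
    eval x (S.map fun r => X - C r).prod ≤
      (x - r₀) * eval x (derivative (S.map fun r => X - C r).prod) := by
  obtain ⟨S', rfl⟩ := Multiset.exists_cons_of_mem hr₀
  have hq := eval_derivative_prod_X_sub_C_nonneg fun r hr => h r (Multiset.mem_cons_of_mem hr)
  have hx : 0 ≤ x - r₀ := sub_nonneg.mpr (h r₀ (Multiset.mem_cons_self r₀ S'))
  simp only [Multiset.map_cons, Multiset.prod_cons, derivative_mul, derivative_X_sub_C, one_mul,
    eval_mul, eval_add, eval_sub, eval_X, eval_C]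
  nlinarith [mul_nonneg (mul_nonneg hx hx) hq]

theorem antitoneOn_eval_div_of_wronskian_nonneg {P Q : ℝ[X]} {s : Set ℝ} (hs : Convex ℝ s)
    (hP : ∀ x ∈ s, 0 < P.eval x) (hW : ∀ x ∈ s, 0 ≤ (wronskian Q P).eval x) :
    AntitoneOn (fun x => Q.eval x / P.eval x) s := by
  have hderiv : ∀ x ∈ s, HasDerivAt (fun x => Q.eval x / P.eval x)
      (-(wronskian Q P).eval x / P.eval x ^ 2) x := fun x hx => by
    refine ((Q.hasDerivAt x).div (P.hasDerivAt x) (hP x hx).ne').congr_deriv ?_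
    simp only [wronskian, eval_sub, eval_mul]
    ring
  refine antitoneOn_of_deriv_nonpos hs (fun x hx => (hderiv x hx).continuousAt.continuousWithinAt)
    (fun x hx => (hderiv x (interior_subset hx)).differentiableAt.differentiableWithinAt)
    fun x hx => ?_
  rw [(hderiv x (interior_subset hx)).deriv]
  exact div_nonpos_of_nonpos_of_nonneg (neg_nonpos.mpr (hW x (interior_subset hx))) (sq_nonneg _)

theorem exists_mem_Ico_mul_one_sub_lt_one (c : ℝ) : ∃ s ∈ Set.Ico (0 : ℝ) 1, c * (1 - s) < 1 := by
  have hc : 1 ≤ max c 1 := le_max_right c 1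
  refine ⟨1 - 1 / (2 * max c 1), ⟨?_, ?_⟩, ?_⟩
  · rw [sub_nonneg, div_le_one (by positivity)]
    linarith
  · rw [sub_lt_self_iff]
    positivity
  · rw [sub_sub_cancel, mul_one_div, div_lt_one (by positivity)]
    linarith [le_max_left c 1]

theorem mem_closure_of_forall_add_smul_mem {E : Type*} [AddCommGroup E] [Module ℝ E]
    [TopologicalSpace E] [ContinuousAdd E] [ContinuousSMul ℝ E] {S : Set E} {a v : E}
    (h : ∀ ε : ℝ, 0 < ε → a + ε • v ∈ S) : a ∈ closure S := by
  have hlim : Tendsto (fun ε : ℝ => a + ε • v) (𝓝[>] 0) (𝓝 a) := by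
    have hcont : Continuous fun ε : ℝ => a + ε • v := by fun_prop
    simpa using (hcont.tendsto 0).mono_left nhdsWithin_le_nhds
  exact mem_closure_of_tendsto hlim (eventually_nhdsWithin_of_forall fun ε hε => h ε hε)

theorem IsSOS.eval_nonneg {n : ℕ} {p : MvPolynomial (Fin n) ℝ} (hp : IsSOS p) (x : Fin n → ℝ) :
    0 ≤ MvPolynomial.eval x p := by
  obtain ⟨k, g, rfl⟩ := hp
  simpa using Finset.sum_nonneg fun i _ => sq_nonneg (MvPolynomial.eval x (g i))

section HyperbolicityCone

variable {n : ℕ} {f : MvPolynomial (Fin n) ℝ} {e a : Fin n → ℝ} {R : Multiset ℝ}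

theorem HasLineRoots.eval_eq_prod (hfac : HasLineRoots f e a R) (s t : ℝ) :
    (lineRestrict f e (s • a)).eval t =
      MvPolynomial.eval e f * (R.map fun r => t - s * r).prod := by
  rw [hfac, eval_mul, eval_C, eval_multiset_prod, Multiset.map_map]
  simp

theorem HasLineRoots.nonpos_of_Wron_nonneg (hfac : HasLineRoots f e a R)
    (hfe : 0 < MvPolynomial.eval e f) (hW : ∀ x, 0 ≤ MvPolynomial.eval x (Wron e a f)) :
    ∀ r ∈ R, r ≤ 0 := by
  by_contra! hpos
  obtain ⟨r₀, hr₀R, hr₀⟩ := hpos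
  obtain ⟨τ, hτR, hτmax⟩ := R.toFinset.exists_max_image id ⟨r₀, Multiset.mem_toFinset.mpr hr₀R⟩
  simp only [Multiset.mem_toFinset, id] at hτR hτmax
  have hτ : 0 < τ := hr₀.trans_le (hτmax r₀ hr₀R)
  set P := lineRestrict f a (τ • e)
  set Q := lineRestrict (Dd e f) a (τ • e)
  have hP : ∀ s, P.eval s = (lineRestrict f e (s • a)).eval τ := fun s => by
    rw [eval_lineRestrict, eval_lineRestrict, add_comm]
  have hQ : ∀ s, Q.eval s = (derivative (lineRestrict f e (s • a))).eval τ := fun s => by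
    rw [derivative_lineRestrict, eval_lineRestrict, eval_lineRestrict, add_comm]
  have hlt : ∀ s ∈ Set.Ico (0 : ℝ) 1, ∀ r ∈ R, s * r < τ := fun s hs r hr => by
    nlinarith [hτmax r hr, hs.1, hs.2]
  have hPpos : ∀ s ∈ Set.Ico (0 : ℝ) 1, 0 < P.eval s := fun s hs => by
    rw [hP, hfac.eval_eq_prod]
    refine mul_pos hfe (Multiset.prod_pos fun y hy => ?_)
    obtain ⟨r, hr, rfl⟩ := Multiset.mem_map.mp hy
    exact sub_pos.mpr (hlt s hs r hr)
  have hanti : AntitoneOn (fun s => Q.eval s / P.eval s) (Set.Ico 0 1) :=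
    antitoneOn_eval_div_of_wronskian_nonneg (convex_Ico 0 1) hPpos fun s _ => by
      rw [← lineRestrict_Wron, eval_lineRestrict]
      exact hW _
  have hblow : ∀ s ∈ Set.Ico (0 : ℝ) 1, P.eval s ≤ τ * (1 - s) * Q.eval s := fun s hs => by
    have key := eval_prod_X_sub_C_le_mul_eval_derivative (x := τ)
      (Multiset.mem_map_of_mem (s * ·) hτR) (by
        simpa using fun r hr => (hlt s hs r hr).le)
    rw [Multiset.map_map] at key
    rw [hP, hQ, hfac, derivative_C_mul, eval_mul, eval_mul, eval_C]
    simp only [Function.comp_def] at key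
    nlinarith
  obtain ⟨s, hs, hlt1⟩ := exists_mem_Ico_mul_one_sub_lt_one (τ * (Q.eval 0 / P.eval 0))
  have hu : Q.eval s / P.eval s ≤ Q.eval 0 / P.eval 0 := hanti ⟨le_rfl, one_pos⟩ hs hs.1
  rw [div_le_iff₀ (hPpos s hs)] at hu
  have hle := (hblow s hs).trans
    (mul_le_mul_of_nonneg_left hu (mul_nonneg hτ.le (sub_nonneg.mpr hs.2.le)))
  nlinarith [hPpos s hs]

theorem mem_hypCone_of_forall_mem_segment {y : Fin n → ℝ}
    (h : ∀ x ∈ segment ℝ e y, MvPolynomial.eval x f ≠ 0) : y ∈ hypCone f e :=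
  (convex_segment e y).isPreconnected.subset_connectedComponentIn (left_mem_segment ℝ e y) h
    (right_mem_segment ℝ e y)

theorem HasLineRoots.add_smul_mem_hypCone (hfac : HasLineRoots f e a R)
    (hfe : 0 < MvPolynomial.eval e f) (hR : ∀ r ∈ R, r ≤ 0) {ε : ℝ} (hε : 0 < ε) :
    a + ε • e ∈ hypCone f e := by
  refine mem_hypCone_of_forall_mem_segment fun x ⟨l, m, hl, hm, hlm, hx⟩ => ?_
  have hpt : x = m • a + (l + m * ε) • e := by
    rw [← hx, smul_add, smul_smul, add_smul]; abel
  have ht : 0 < l + m * ε := by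
    rcases hm.eq_or_lt with rfl | hm
    · linarith
    · positivity
  rw [hpt, ← eval_lineRestrict, hfac.eval_eq_prod]
  refine (mul_pos hfe (Multiset.prod_pos fun y hy => ?_)).ne'
  obtain ⟨r, hr, rfl⟩ := Multiset.mem_map.mp hy
  nlinarith [hR r hr]

end HyperbolicityCone

theorem sos_relaxation_subset_general {n d : ℕ} (f : MvPolynomial (Fin n) ℝ) (e : Fin n → ℝ)
    (hf : f.IsHomogeneous d) (hyp : IsHyperbolic f e)
    (hfe : 0 < MvPolynomial.eval e f) :
    {a : Fin n → ℝ | IsSOS (Wron e a f)} ⊆ closure (hypCone f e) := by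
  intro a ha
  have hfac := hasLineRoots_roots hf hfe.ne' (hyp.2 a)
  have hR := hfac.nonpos_of_Wron_nonneg hfe ha.eval_nonneg
  exact mem_closure_of_forall_add_smul_mem fun ε hε => hfac.add_smul_mem_hypCone hfe hR hε

/-- The sums-of-squares relaxation is an inner approximation of the closed hyperbolicity
cone. -/
theorem sos_relaxation_subset {n d : ℕ} (f : MvPolynomial (Fin n) ℝ) (e : Fin n → ℝ)
    (hf : f.IsHomogeneous d) (hsf : Squarefree f) (hyp : IsHyperbolic f e)
    (hfe : 0 < MvPolynomial.eval e f) :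
    {a : Fin n → ℝ | IsSOS (Wron e a f)} ⊆ closure (hypCone f e) :=
  sos_relaxation_subset_general f e hf hyp hfe
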